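/- arXiv:2409.15301 — 5 statements merged into one kernel-verified Lean document; each statement's English description precedes it below -/
import Mathlib

section
/- Let f be a probability density function differentiable at a point m with f(m) > 0, f'(m) = 0, and F(m) = 1/2. Then m is a critical point of the derangetropy: (ρ_f)'(m) = 0. -/
open MeasureTheory

/-- Cumulative distribution function of a density `f`: `F(x) = ∫_{-∞}^x f(t) dt`. -/
noncomputable def cdfFn (f : ℝ → ℝ) (x : ℝ) : ℝ := ∫ t in Set.Iic x, f t

/-- The derangetropy functional
`ρ_f(x) = (24/(πe)) · sin (π F(x)) · F(x)^{F(x)} · (1-F(x))^{1-F(x)} · f(x)`,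
where powers are real powers (so `0^0 = 1`). -/
noncomputable def derangetropy (f : ℝ → ℝ) (x : ℝ) : ℝ :=
  24 / (Real.pi * Real.exp 1) * Real.sin (Real.pi * cdfFn f x) *
    cdfFn f x ^ cdfFn f x * (1 - cdfFn f x) ^ (1 - cdfFn f x) * f x

/-!
Write `ρ_f = g ∘ F · f` with `g(u) = (24/(πe)) sin(πu) · u^u (1-u)^(1-u)`. Both factors of `g` are
symmetric under `u ↦ 1 - u`, so `g'(1/2) = 0`. By the fundamental theorem of calculus `F' = f`
at `m`, so the chain and product rules give `ρ_f'(m) = g'(1/2) f(m)² + g(1/2) f'(m) = 0`.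
-/

open Real

theorem cdfFn_eq_add_intervalIntegral {f : ℝ → ℝ} (hf : Integrable f) (a b : ℝ) :
    cdfFn f b = cdfFn f a + ∫ t in a..b, f t := by
  rw [← intervalIntegral.integral_Iic_sub_Iic hf.integrableOn hf.integrableOn, cdfFn, cdfFn,
    add_sub_cancel]

theorem hasDerivAt_cdfFn {f : ℝ → ℝ} (hf : Integrable f) {x : ℝ} (hcont : ContinuousAt f x) :
    HasDerivAt (cdfFn f) (f x) x := by
  have hFTC : HasDerivAt (fun y ↦ ∫ t in x..y, f t) (f x) x :=
    intervalIntegral.integral_hasDerivAt_right hf.intervalIntegrable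
      hf.aestronglyMeasurable.stronglyMeasurableAtFilter hcont
  simpa [← cdfFn_eq_add_intervalIntegral hf x] using hFTC.const_add (cdfFn f x)

noncomputable def derangetropyProfile (u : ℝ) : ℝ :=
  24 / (π * exp 1) * sin (π * u) * (u ^ u * (1 - u) ^ (1 - u))

theorem derangetropy_eq_profile (f : ℝ → ℝ) :
    derangetropy f = fun x ↦ derangetropyProfile (cdfFn f x) * f x := by
  funext x
  simp only [derangetropy, derangetropyProfile]
  ring

theorem hasDerivAt_sin_pi_mul_half : HasDerivAt (fun u ↦ sin (π * u)) 0 (1 / 2) := by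
  refine (((hasDerivAt_id' (1 / 2 : ℝ)).const_mul π).sin).congr_deriv ?_
  rw [mul_one_div, cos_pi_div_two, zero_mul]

theorem hasDerivAt_rpow_self_mul_one_sub_half :
    HasDerivAt (fun u : ℝ ↦ u ^ u * (1 - u) ^ (1 - u)) 0 (1 / 2) := by
  have hpow := (hasDerivAt_id' (1 / 2 : ℝ)).rpow (hasDerivAt_id' _) (by norm_num)
  have hpow' := ((hasDerivAt_id' (1 / 2 : ℝ)).const_sub 1).rpow
    ((hasDerivAt_id' _).const_sub 1) (by norm_num)
  refine (hpow.mul hpow').congr_deriv ?_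
  rw [show (1 : ℝ) - 1 / 2 = 1 / 2 by norm_num]
  ring

theorem hasDerivAt_derangetropyProfile_half : HasDerivAt derangetropyProfile 0 (1 / 2) :=
  ((hasDerivAt_sin_pi_mul_half.const_mul (24 / (π * exp 1))).mul
    hasDerivAt_rpow_self_mul_one_sub_half).congr_deriv (by ring)

theorem derangetropy_hasDerivAt_median_general (f : ℝ → ℝ)
    (hint : ∫ x, f x = 1)
    (m : ℝ) (hf : HasDerivAt f 0 m) (hFm : cdfFn f m = 1 / 2) :
    HasDerivAt (derangetropy f) 0 m := by
  have hF : HasDerivAt (cdfFn f) (f m) m :=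
    hasDerivAt_cdfFn (Integrable.of_integral_ne_zero (by simp [hint])) hf.continuousAt
  have hprofile : HasDerivAt (fun x ↦ derangetropyProfile (cdfFn f x)) 0 m :=
    (hasDerivAt_derangetropyProfile_half.comp_of_eq m hF hFm.symm).congr_deriv (zero_mul _)
  rw [derangetropy_eq_profile]
  exact (hprofile.mul hf).congr_deriv (by ring)

/-- Critical point at the median: if `f` is differentiable at `m` with `f(m) > 0`,
`f'(m) = 0` and `F(m) = 1/2`, then `(ρ_f)'(m) = 0`. -/
theorem derangetropy_hasDerivAt_median (f : ℝ → ℝ) (hmeas : Measurable f)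
    (hnonneg : ∀ x, 0 ≤ f x) (hint : ∫ x, f x = 1)
    (m : ℝ) (hf : HasDerivAt f 0 m) (hfm : 0 < f m) (hFm : cdfFn f m = 1 / 2) :
    HasDerivAt (derangetropy f) 0 m :=
  derangetropy_hasDerivAt_median_general f hint m hf hFm
end

section
/- Let f be a probability density function that is symmetric about a point m (i.e., f(m+t) = f(m−t) for all t) and unimodal with mode m (i.e., f is nondecreasing on (−∞, m] and nonincreasing on [m, ∞)). Then the derangetropy ρ_f attains its global maximum at the median m: ρ_f(x) ≤ ρ_f(m) for all x ∈ ℝ. -/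
/-!
At the median `F = 1/2` the weight `w(u) = sin (π u) u^u (1-u)^(1-u)` equals `1/2`, and it never
exceeds `1/2` on `[0, 1]`: weighted AM-GM gives `u^u (1-u)^(1-u) ≤ u² + (1-u)²`, and with
`u = 1/2 + t` the remaining bound `cos (π t) (1 + 4t²) ≤ 1` follows from the half-angle formula and
`sin y ≥ y - y³/6`. Unimodality makes `m` a maximum of the density factor `f` as well, and
symmetry places the median at `m`.
-/

open MeasureTheory

open Real Set

lemma Real.cos_two_mul_le_one_sub_two_mul_sq_sub_cube {y : ℝ} (hy0 : 0 ≤ y) (hy : y ≤ π / 2) :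
    cos (2 * y) ≤ 1 - 2 * (y - y ^ 3 / 6) ^ 2 := by
  have hy2 : y ≤ 2 := by linarith [pi_lt_four]
  have hsub : 0 ≤ y - y ^ 3 / 6 := by nlinarith [mul_nonneg hy0 (by nlinarith : 0 ≤ 6 - y ^ 2)]
  have hsq := pow_le_pow_left₀ hsub (sin_ge_sub_cube hy0) 2
  rw [sin_sq_eq_half_sub] at hsq
  linarith

lemma Real.cos_pi_mul_mul_one_add_four_mul_sq_le_one {t : ℝ} (ht : |t| ≤ 1 / 2) :
    cos (π * t) * (1 + 4 * t ^ 2) ≤ 1 := by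
  wlog ht0 : 0 ≤ t generalizing t
  · simpa [mul_neg, cos_neg] using this (t := -t) (by rwa [abs_neg]) (by linarith)
  rw [abs_of_nonneg ht0] at ht
  have hcos := cos_two_mul_le_one_sub_two_mul_sq_sub_cube (by positivity : 0 ≤ π * t / 2)
    (by nlinarith [pi_pos])
  rw [show 2 * (π * t / 2) = π * t by ring] at hcos
  have hπ : 9 < π ^ 2 := by nlinarith [pi_gt_three]
  have hπ' : π ^ 2 < 16 := by nlinarith [pi_lt_four, pi_pos]
  -- with `s = t²`: `(1 - π² s / 24)² (1 + 4 s) ≥ 1` on `[0, 1/4]`, and `π² ≥ 8`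
  have hpoly : 8 * t ^ 2 ≤ π ^ 2 * t ^ 2 * (1 - π ^ 2 * t ^ 2 / 24) ^ 2 * (1 + 4 * t ^ 2) := by
    have hs : t ^ 2 ≤ 1 / 4 := by nlinarith
    have hs0 : 0 ≤ t ^ 2 := sq_nonneg t
    have hbig : 1 ≤ (1 - π ^ 2 * t ^ 2 / 24) ^ 2 * (1 + 4 * t ^ 2) := by
      nlinarith [sq_nonneg (π ^ 2 * t ^ 2 / 24), mul_nonneg hs0 hs0,
        mul_nonneg (mul_nonneg hs0 hs0) (sq_nonneg (π ^ 2 * t ^ 2 / 24))]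
    nlinarith [mul_le_mul_of_nonneg_left hbig (mul_nonneg (by positivity : (0 : ℝ) ≤ π ^ 2) hs0)]
  calc cos (π * t) * (1 + 4 * t ^ 2)
      ≤ (1 - 2 * (π * t / 2 - (π * t / 2) ^ 3 / 6) ^ 2) * (1 + 4 * t ^ 2) := by gcongr
    _ ≤ 1 := by nlinarith [hpoly]

lemma Real.sin_pi_mul_mul_sq_add_sq_le_half {u : ℝ} (hu0 : 0 ≤ u) (hu1 : u ≤ 1) :
    sin (π * u) * (u ^ 2 + (1 - u) ^ 2) ≤ 1 / 2 := by
  have ht : |u - 1 / 2| ≤ 1 / 2 := abs_le.2 ⟨by linarith, by linarith⟩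
  have hsin : sin (π * u) = cos (π * (u - 1 / 2)) := by
    rw [← sin_add_pi_div_two]; ring_nf
  have := cos_pi_mul_mul_one_add_four_mul_sq_le_one ht
  rw [hsin]
  nlinarith

lemma Real.rpow_self_mul_rpow_one_sub_self_le {u : ℝ} (hu0 : 0 ≤ u) (hu1 : u ≤ 1) :
    u ^ u * (1 - u) ^ (1 - u) ≤ u ^ 2 + (1 - u) ^ 2 := by
  have h := geom_mean_le_arith_mean2_weighted hu0 (sub_nonneg.2 hu1) hu0 (sub_nonneg.2 hu1)
    (by ring)
  linarith

noncomputable def derangetropyWeight (u : ℝ) : ℝ :=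
  sin (π * u) * u ^ u * (1 - u) ^ (1 - u)

lemma derangetropy_eq (f : ℝ → ℝ) (x : ℝ) :
    derangetropy f x = 24 / (π * exp 1) * derangetropyWeight (cdfFn f x) * f x := by
  simp only [derangetropy, derangetropyWeight]
  ring

lemma derangetropyWeight_half : derangetropyWeight (1 / 2) = 1 / 2 := by
  have hsq : ((1 : ℝ) / 2) ^ ((1 : ℝ) / 2) * (1 / 2) ^ ((1 : ℝ) / 2) = 1 / 2 := by
    rw [← rpow_add (by norm_num)]; norm_num
  rw [derangetropyWeight, show π * (1 / 2) = π / 2 by ring, sin_pi_div_two,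
    show (1 : ℝ) - 1 / 2 = 1 / 2 by norm_num, mul_assoc, hsq, one_mul]

lemma derangetropyWeight_le_half {u : ℝ} (hu0 : 0 ≤ u) (hu1 : u ≤ 1) :
    derangetropyWeight u ≤ 1 / 2 := by
  have hsin : 0 ≤ sin (π * u) :=
    sin_nonneg_of_nonneg_of_le_pi (by positivity) (mul_le_of_le_one_right pi_pos.le hu1)
  calc derangetropyWeight u = sin (π * u) * (u ^ u * (1 - u) ^ (1 - u)) := by
        rw [derangetropyWeight, mul_assoc]
    _ ≤ sin (π * u) * (u ^ 2 + (1 - u) ^ 2) := by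
        gcongr; exact rpow_self_mul_rpow_one_sub_self_le hu0 hu1
    _ ≤ 1 / 2 := sin_pi_mul_mul_sq_add_sq_le_half hu0 hu1

section cdfFn

variable {f : ℝ → ℝ}

lemma cdfFn_nonneg (hnonneg : ∀ x, 0 ≤ f x) (x : ℝ) : 0 ≤ cdfFn f x :=
  setIntegral_nonneg measurableSet_Iic fun t _ ↦ hnonneg t

lemma cdfFn_le_integral (hf : Integrable f) (hnonneg : ∀ x, 0 ≤ f x) (x : ℝ) :
    cdfFn f x ≤ ∫ t, f t :=
  setIntegral_le_integral hf (.of_forall hnonneg)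

lemma integral_Ioi_eq_integral_Iic_of_symm {E : Type*} [NormedAddCommGroup E] [NormedSpace ℝ E]
    {g : ℝ → E} {m : ℝ} (hsym : ∀ t, g (m + t) = g (m - t)) :
    ∫ x in Ioi m, g x = ∫ x in Iic m, g x := by
  have hrefl := (Measure.measurePreserving_sub_left volume (2 * m)).setIntegral_preimage_emb
    (measurableEmbedding_subLeft (2 * m)) g (Ioi m)
  have hpre : (fun x ↦ 2 * m - x) ⁻¹' Ioi m = Iio m := by
    ext x; simp only [mem_preimage, mem_Ioi, mem_Iio]; constructor <;> intro <;> linarith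
  have hg : ∀ x, g (2 * m - x) = g x := fun x ↦ by
    simpa [two_mul, add_sub_assoc] using hsym (m - x)
  simp only [hpre, hg] at hrefl
  rw [← hrefl, integral_Iic_eq_integral_Iio]

lemma cdfFn_eq_half_integral_of_symm (hf : Integrable f) {m : ℝ}
    (hsym : ∀ t, f (m + t) = f (m - t)) : cdfFn f m = (∫ x, f x) / 2 := by
  have hsplit := intervalIntegral.integral_Iic_add_Ioi (b := m) hf.integrableOn hf.integrableOn
  rw [integral_Ioi_eq_integral_Iic_of_symm hsym] at hsplit
  rw [cdfFn, ← hsplit]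
  ring

end cdfFn

theorem derangetropy_max_at_median_general (f : ℝ → ℝ)
    (hnonneg : ∀ x, 0 ≤ f x) (hint : ∫ x, f x = 1)
    (m : ℝ) (hsym : ∀ t, f (m + t) = f (m - t))
    (hmono : MonotoneOn f (Set.Iic m)) (hanti : AntitoneOn f (Set.Ici m)) :
    ∀ x, derangetropy f x ≤ derangetropy f m := by
  have hf : Integrable f := .of_integral_ne_zero (by simp [hint])
  have hmedian : cdfFn f m = 1 / 2 := by rw [cdfFn_eq_half_integral_of_symm hf hsym, hint]
  have hmode : IsMaxOn f univ m := isMaxOn_univ_of_mono_anti hmono hanti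
  intro x
  have hweight : derangetropyWeight (cdfFn f x) ≤ 1 / 2 :=
    derangetropyWeight_le_half (cdfFn_nonneg hnonneg x) (hint ▸ cdfFn_le_integral hf hnonneg x)
  rw [derangetropy_eq, derangetropy_eq, hmedian, derangetropyWeight_half]
  gcongr
  · exact hnonneg x
  · exact hmode (mem_univ x)

/-- For a symmetric unimodal density (symmetric about `m`, nondecreasing on
`(-∞, m]` and nonincreasing on `[m, ∞)`), the derangetropy attains its global
maximum at the median `m`. -/
theorem derangetropy_max_at_median (f : ℝ → ℝ) (hmeas : Measurable f)
    (hnonneg : ∀ x, 0 ≤ f x) (hint : ∫ x, f x = 1)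
    (m : ℝ) (hsym : ∀ t, f (m + t) = f (m - t))
    (hmono : MonotoneOn f (Set.Iic m)) (hanti : AntitoneOn f (Set.Ici m)) :
    ∀ x, derangetropy f x ≤ derangetropy f m :=
  derangetropy_max_at_median_general f hnonneg hint m hsym hmono hanti
end

section
/- For all x ∈ (0,1), the inequality sin(πx) · x^x · (1−x)^{1−x} ≤ 1/2 holds, with equality if and only if x = 1/2. Equivalently, the derangetropy of the uniform distribution on (0,1), ρ(x) = (24/(πe)) sin(πx) x^x (1−x)^{1−x}, attains its global maximum at x = 1/2 with value 12/(πe). -/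
/-!
Concavity of `sin` on `[0, π/4]` gives `sin (π s / 2) ≥ √2 s` for `0 ≤ s ≤ 1/2`, and the
double-angle formula turns this into `sin (π x) ≤ 4 x (1 - x)`. It then suffices that
`x ^ (1 + x) * (1 - x) ^ (2 - x) ≤ 1 / 8`, with equality only at `x = 1/2`: the logarithm
`(1 + x) log x + (2 - x) log (1 - x)` is symmetric under `x ↦ 1 - x`, and `log y ≥ 1 - 1/y`
shows that its derivative is positive on `(0, 1/2)`.
-/

open Real Set

theorem mul_sin_le_sin_mul {t a : ℝ} (ht0 : 0 ≤ t) (ht1 : t ≤ 1) (ha0 : 0 ≤ a)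
    (haπ : a ≤ π) :
    t * sin a ≤ sin (t * a) := by
  simpa using strictConcaveOn_sin_Icc.concaveOn.2 ⟨le_rfl, pi_pos.le⟩ ⟨ha0, haπ⟩
    (sub_nonneg.2 ht1) ht0 (by ring)

theorem sin_pi_mul_le_four_mul_mul_one_sub {x : ℝ} (hx0 : 0 ≤ x) (hx1 : x ≤ 1) :
    sin (π * x) ≤ 4 * x * (1 - x) := by
  set s := |1 / 2 - x| with hs
  have hs1 : 2 * s ≤ 1 := by
    rw [hs]; cases abs_cases (1 / 2 - x) <;> linarith
  have hchord : √2 * s ≤ sin (π / 2 * s) := by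
    have := mul_sin_le_sin_mul (by positivity) hs1 (by positivity : 0 ≤ π / 4)
      (by linarith [pi_pos])
    rwa [sin_pi_div_four, show 2 * s * (√2 / 2) = √2 * s by ring,
      show 2 * s * (π / 4) = π / 2 * s by ring] at this
  have hsin : sin (π * x) = 1 - 2 * sin (π / 2 * s) ^ 2 :=
    calc sin (π * x) = cos |π / 2 - π * x| := by rw [cos_abs, cos_pi_div_two_sub]
      _ = cos (2 * (π / 2 * s)) := by
        rw [show π / 2 - π * x = π * (1 / 2 - x) by ring, abs_mul, abs_of_pos pi_pos, ← hs]
        ring_nf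
      _ = 1 - 2 * sin (π / 2 * s) ^ 2 := by rw [cos_two_mul, cos_sq']; ring
  have hsq : 2 * s ^ 2 ≤ sin (π / 2 * s) ^ 2 := by
    calc 2 * s ^ 2 = (√2 * s) ^ 2 := by rw [mul_pow, sq_sqrt zero_le_two]
      _ ≤ _ := pow_le_pow_left₀ (by positivity) hchord 2
  have hs2 : s ^ 2 = (1 / 2 - x) ^ 2 := sq_abs _
  nlinarith

theorem hasDerivAt_mul_log_add_mul_log_one_sub {x : ℝ} (hx0 : 0 < x) (hx1 : x < 1) :
    HasDerivAt (fun y => (1 + y) * log y + (2 - y) * log (1 - y))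
      (log x - log (1 - x) + (1 - 2 * x) / (x * (1 - x))) x := by
  have h1x : 1 - x ≠ 0 := by linarith
  have := (((hasDerivAt_id x).const_add 1).mul (hasDerivAt_log hx0.ne')).add
    (((hasDerivAt_id x).const_sub 2).mul ((hasDerivAt_log h1x).comp x
      ((hasDerivAt_id x).const_sub 1)))
  refine this.congr_deriv ?_
  simp only [id, Function.comp_apply]
  field_simp
  ring

theorem strictMonoOn_mul_log_add_mul_log_one_sub :
    StrictMonoOn (fun x => (1 + x) * log x + (2 - x) * log (1 - x)) (Ioc 0 (1 / 2)) := by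
  refine strictMonoOn_of_deriv_pos (convex_Ioc 0 (1 / 2)) ?_ ?_
  · intro x hx
    exact (hasDerivAt_mul_log_add_mul_log_one_sub hx.1 (by linarith [hx.2])).continuousAt
      |>.continuousWithinAt
  · rw [interior_Ioc]
    intro x ⟨hx0, hx1⟩
    rw [(hasDerivAt_mul_log_add_mul_log_one_sub hx0 (by linarith)).deriv]
    have hlog := one_sub_inv_le_log_of_pos (div_pos hx0 (by linarith : 0 < 1 - x))
    rw [log_div hx0.ne' (by linarith), inv_div] at hlog
    have h1x : 1 - x ≠ 0 := by linarith
    have : 1 - (1 - x) / x + (1 - 2 * x) / (x * (1 - x)) = (1 - 2 * x) / (1 - x) := by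
      field_simp; ring
    have : 0 < (1 - 2 * x) / (1 - x) := div_pos (by linarith) (by linarith)
    linarith

theorem mul_log_add_mul_log_one_sub_lt {x : ℝ} (hx0 : 0 < x) (hx1 : x < 1) (hx : x ≠ 1 / 2) :
    (1 + x) * log x + (2 - x) * log (1 - x)
      < (1 + 1 / 2) * log (1 / 2) + (2 - 1 / 2) * log (1 - 1 / 2) := by
  rcases hx.lt_or_gt with hlt | hgt
  · exact strictMonoOn_mul_log_add_mul_log_one_sub ⟨hx0, hlt.le⟩ ⟨by norm_num, le_rfl⟩ hlt
  · -- the function is invariant under `x ↦ 1 - x`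
    have := strictMonoOn_mul_log_add_mul_log_one_sub (a := 1 - x) ⟨by linarith, by linarith⟩
      ⟨by norm_num, le_rfl⟩ (by linarith)
    simp only [sub_sub_cancel] at this
    linarith

theorem mul_one_sub_mul_rpow_eq_exp {x : ℝ} (hx0 : 0 < x) (hx1 : x < 1) :
    x * (1 - x) * (x ^ x * (1 - x) ^ (1 - x)) = exp ((1 + x) * log x + (2 - x) * log (1 - x)) := by
  have h1x : 0 < 1 - x := by linarith
  rw [rpow_def_of_pos hx0, rpow_def_of_pos h1x,
    show (1 + x) * log x + (2 - x) * log (1 - x)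
      = log x + log (1 - x) + log x * x + log (1 - x) * (1 - x) by ring,
    exp_add, exp_add, exp_add, exp_log hx0, exp_log h1x]
  ring

theorem half_rpow_mul_one_sub_half_rpow :
    (1 / 2 : ℝ) ^ (1 / 2 : ℝ) * (1 - 1 / 2 : ℝ) ^ (1 - 1 / 2 : ℝ) = 1 / 2 := by
  rw [show (1 - 1 / 2 : ℝ) = 1 / 2 by norm_num, ← rpow_add (by norm_num)]
  norm_num

theorem sin_pi_mul_mul_rpow_half :
    sin (π * (1 / 2)) * (1 / 2 : ℝ) ^ (1 / 2 : ℝ) * (1 - 1 / 2 : ℝ) ^ (1 - 1 / 2 : ℝ)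
      = 1 / 2 := by
  rw [mul_assoc, half_rpow_mul_one_sub_half_rpow, mul_one_div π 2, sin_pi_div_two, one_mul]

theorem sin_pi_mul_mul_rpow_lt_half {x : ℝ} (hx0 : 0 < x) (hx1 : x < 1) (hx : x ≠ 1 / 2) :
    sin (π * x) * x ^ x * (1 - x) ^ (1 - x) < 1 / 2 := by
  calc sin (π * x) * x ^ x * (1 - x) ^ (1 - x)
      ≤ 4 * x * (1 - x) * (x ^ x * (1 - x) ^ (1 - x)) := by
        rw [mul_assoc]
        exact mul_le_mul_of_nonneg_right (sin_pi_mul_le_four_mul_mul_one_sub hx0.le hx1.le)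
          (by positivity)
    _ = 4 * exp ((1 + x) * log x + (2 - x) * log (1 - x)) := by
        rw [← mul_one_sub_mul_rpow_eq_exp hx0 hx1]; ring
    _ < 4 * exp ((1 + 1 / 2) * log (1 / 2) + (2 - 1 / 2) * log (1 - 1 / 2)) := by
        gcongr 4 * exp ?_
        exact mul_log_add_mul_log_one_sub_lt hx0 hx1 hx
    _ = 1 / 2 := by
        rw [← mul_one_sub_mul_rpow_eq_exp (by norm_num) (by norm_num),
          half_rpow_mul_one_sub_half_rpow]
        norm_num

/-- For all `x ∈ (0,1)`, `sin(πx)·x^x·(1-x)^(1-x) ≤ 1/2`, with equality iff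
`x = 1/2`.  Equivalently, the derangetropy of the uniform distribution on `(0,1)`,
`ρ(x) = (24/(πe))·sin(πx)·x^x·(1-x)^(1-x)`, attains its global maximum at
`x = 1/2` with value `12/(πe)`. -/
theorem uniform_derangetropy_max :
    (∀ x ∈ Set.Ioo (0:ℝ) 1,
        Real.sin (Real.pi * x) * x ^ x * (1 - x) ^ (1 - x) ≤ 1 / 2 ∧
        (Real.sin (Real.pi * x) * x ^ x * (1 - x) ^ (1 - x) = 1 / 2 ↔ x = 1 / 2)) ∧
    (∀ x ∈ Set.Ioo (0:ℝ) 1,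
        24 / (Real.pi * Real.exp 1) * Real.sin (Real.pi * x) * x ^ x * (1 - x) ^ (1 - x)
          ≤ 12 / (Real.pi * Real.exp 1)) ∧
    24 / (Real.pi * Real.exp 1) * Real.sin (Real.pi * (1 / 2 : ℝ)) *
        (1 / 2 : ℝ) ^ (1 / 2 : ℝ) * (1 - 1 / 2 : ℝ) ^ (1 - 1 / 2 : ℝ)
      = 12 / (Real.pi * Real.exp 1) := by
  have hmax : ∀ x ∈ Ioo (0:ℝ) 1, sin (π * x) * x ^ x * (1 - x) ^ (1 - x) ≤ 1 / 2 ∧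
      (sin (π * x) * x ^ x * (1 - x) ^ (1 - x) = 1 / 2 ↔ x = 1 / 2) := by
    rintro x ⟨hx0, hx1⟩
    rcases eq_or_ne x (1 / 2) with rfl | hx
    · simp only [sin_pi_mul_mul_rpow_half, le_refl, true_and]
    · have hlt := sin_pi_mul_mul_rpow_lt_half hx0 hx1 hx
      exact ⟨hlt.le, iff_of_false hlt.ne hx⟩
  refine ⟨hmax, fun x hx => ?_, ?_⟩
  · linear_combination (24 / (π * exp 1)) * (hmax x hx).1
  · linear_combination (24 / (π * exp 1)) * sin_pi_mul_mul_rpow_half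
end

section
/- Let f be a probability density function symmetric about a point m, i.e., f(m+t) = f(m−t) for all t ∈ ℝ. Then the derangetropy ρ_f is also symmetric about m: ρ_f(m+t) = ρ_f(m−t) for all t ∈ ℝ. -/
open MeasureTheory

/-! Reflecting about `m` maps `(-∞, m + t]` onto `[m - t, ∞)`, so a symmetric density gives
`F(m + t) = 1 - F(m - t)`; and `sin (π p) p^p (1 - p)^(1 - p)` is invariant under `p ↦ 1 - p`. -/

open Set

lemma setIntegral_Iic_add_eq_setIntegral_Ioi_sub {f : ℝ → ℝ} {m : ℝ}
    (hsym : ∀ t, f (m + t) = f (m - t)) (t : ℝ) :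
    ∫ x in Iic (m + t), f x = ∫ x in Ioi (m - t), f x := by
  have hrefl : ∀ x, f (2 * m - x) = f x := fun x => by
    simpa only [show m + (m - x) = 2 * m - x by ring, sub_sub_cancel] using hsym (m - x)
  have hpre : (2 * m - ·) ⁻¹' Ici (m - t) = Iic (m + t) := by
    ext x; simp only [mem_preimage, mem_Ici, mem_Iic]; constructor <;> intro h <;> linarith
  calc ∫ x in Iic (m + t), f x = ∫ x in (2 * m - ·) ⁻¹' Ici (m - t), f (2 * m - x) := by
        rw [hpre]; exact setIntegral_congr_fun measurableSet_Iic fun x _ => (hrefl x).symm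
    _ = ∫ x in Ici (m - t), f x :=
        (Measure.measurePreserving_sub_left volume (2 * m)).setIntegral_preimage_emb
          (MeasurableEquiv.subLeft (2 * m)).measurableEmbedding f _
    _ = ∫ x in Ioi (m - t), f x := integral_Ici_eq_integral_Ioi

lemma cdfFn_add_add_cdfFn_sub {f : ℝ → ℝ} (hf : Integrable f) {m : ℝ}
    (hsym : ∀ t, f (m + t) = f (m - t)) (t : ℝ) :
    cdfFn f (m + t) + cdfFn f (m - t) = ∫ x, f x := by
  rw [cdfFn, cdfFn, setIntegral_Iic_add_eq_setIntegral_Ioi_sub hsym, add_comm,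
    intervalIntegral.integral_Iic_add_Ioi hf.integrableOn hf.integrableOn]

lemma derangetropy_eq_of_cdfFn_add_eq_one {f : ℝ → ℝ} {x y : ℝ}
    (hF : cdfFn f x + cdfFn f y = 1) (hf : f x = f y) :
    derangetropy f x = derangetropy f y := by
  rw [derangetropy, derangetropy, hf, eq_sub_of_add_eq hF, sub_sub_cancel, mul_sub, mul_one,
    Real.sin_pi_sub]
  ring

theorem derangetropy_symm_general (f : ℝ → ℝ) (hint : ∫ x, f x = 1)
    (m : ℝ) (hsym : ∀ t, f (m + t) = f (m - t)) :
    ∀ t, derangetropy f (m + t) = derangetropy f (m - t) := by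
  intro t
  have hF := cdfFn_add_add_cdfFn_sub (integrable_of_integral_eq_one hint) hsym t
  exact derangetropy_eq_of_cdfFn_add_eq_one (hF.trans hint) (hsym t)

/-- If the density `f` is symmetric about `m`, then so is its derangetropy:
`ρ_f(m+t) = ρ_f(m-t)` for all `t`. -/
theorem derangetropy_symm (f : ℝ → ℝ) (hmeas : Measurable f)
    (hnonneg : ∀ x, 0 ≤ f x) (hint : ∫ x, f x = 1)
    (m : ℝ) (hsym : ∀ t, f (m + t) = f (m - t)) :
    ∀ t, derangetropy f (m + t) = derangetropy f (m - t) :=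
  derangetropy_symm_general f hint m hsym
end

section
/- Define g : ℂ → ℂ by g(u) = exp( u·e^u/(e^u − 1) ) · e^u/(e^u − 1)³ (for e^u ≠ 1). Then for all sufficiently small r > 0, the counterclockwise circle integral of g around 0 of radius r equals −2πi·e/24; equivalently, the residue of g at u = 0 is −e/24. -/
/-!
The residue of `g` at `0` is the coefficient of `u²` in the holomorphic function
`h(u) = u³ g(u) = exp (eᵘ b(u)) · eᵘ · b(u)³`, where `b(u) = u / (eᵘ - 1) = 1 - u/2 + u²/12 + ⋯`.
Propagating value, first and second derivative at `0` through products, inverses and `exp` gives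
`h''(0) = -e/12`, and Cauchy's formula for `∮ h(u)/u³` turns this into `2πi · (-e/24)`.
-/

/-- The function `g(u) = exp(u·e^u/(e^u-1)) · e^u/(e^u-1)³`. -/
noncomputable def gFun (u : ℂ) : ℂ :=
  Complex.exp (u * Complex.exp u / (Complex.exp u - 1)) *
    Complex.exp u / (Complex.exp u - 1) ^ 3

open Complex Metric Filter
open scoped Topology

structure HasJet2At {𝕜 : Type*} [NontriviallyNormedField 𝕜] (f : 𝕜 → 𝕜) (c₀ c₁ c₂ z : 𝕜) :
    Prop where
  analyticAt : AnalyticAt 𝕜 f z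
  apply_eq : f z = c₀
  deriv_eq : deriv f z = c₁
  deriv_deriv_eq : deriv (deriv f) z = c₂

namespace HasJet2At

variable {𝕜 : Type*} [NontriviallyNormedField 𝕜] {f g : 𝕜 → 𝕜} {z a₀ a₁ a₂ b₀ b₁ b₂ : 𝕜}

theorem congr_jet (hf : HasJet2At f a₀ a₁ a₂ z) (h₀ : a₀ = b₀) (h₁ : a₁ = b₁) (h₂ : a₂ = b₂) :
    HasJet2At f b₀ b₁ b₂ z :=
  h₀ ▸ h₁ ▸ h₂ ▸ hf

theorem of_eventually_hasDerivAt {G : 𝕜 → 𝕜} (hf : AnalyticAt 𝕜 f z) (h₀ : f z = a₀)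
    (hG : ∀ᶠ u in 𝓝 z, HasDerivAt f (G u) u) (h₁ : G z = a₁) (h₂ : HasDerivAt G a₂ z) :
    HasJet2At f a₀ a₁ a₂ z := by
  have hderiv : deriv f =ᶠ[𝓝 z] G := hG.mono fun u hu ↦ hu.deriv
  exact ⟨hf, h₀, hderiv.eq_of_nhds.trans h₁, hderiv.deriv_eq.trans h₂.deriv⟩

theorem hasDerivAt (hf : HasJet2At f a₀ a₁ a₂ z) : HasDerivAt f a₁ z :=
  hf.deriv_eq ▸ hf.analyticAt.differentiableAt.hasDerivAt

protected theorem id (z : 𝕜) : HasJet2At (fun u ↦ u) z 1 0 z :=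
  of_eventually_hasDerivAt analyticAt_id rfl (.of_forall hasDerivAt_id) rfl (hasDerivAt_const z 1)

variable [CompleteSpace 𝕜]

theorem eventually_hasDerivAt (hf : HasJet2At f a₀ a₁ a₂ z) :
    ∀ᶠ u in 𝓝 z, HasDerivAt f (deriv f u) u :=
  hf.analyticAt.eventually_analyticAt.mono fun _ hu ↦ hu.differentiableAt.hasDerivAt

theorem hasDerivAt_deriv (hf : HasJet2At f a₀ a₁ a₂ z) : HasDerivAt (deriv f) a₂ z :=
  hf.deriv_deriv_eq ▸ hf.analyticAt.deriv.differentiableAt.hasDerivAt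

protected theorem mul (hf : HasJet2At f a₀ a₁ a₂ z) (hg : HasJet2At g b₀ b₁ b₂ z) :
    HasJet2At (fun u ↦ f u * g u) (a₀ * b₀) (a₁ * b₀ + a₀ * b₁)
      (a₂ * b₀ + 2 * a₁ * b₁ + a₀ * b₂) z := by
  refine of_eventually_hasDerivAt (hf.analyticAt.mul hg.analyticAt)
    (by rw [hf.apply_eq, hg.apply_eq])
    ((hf.eventually_hasDerivAt.and hg.eventually_hasDerivAt).mono fun u hu ↦ hu.1.mul hu.2)
    (by rw [hf.apply_eq, hg.apply_eq, hf.deriv_eq, hg.deriv_eq]) ?_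
  refine ((hf.hasDerivAt_deriv.mul hg.hasDerivAt).add
    (hf.hasDerivAt.mul hg.hasDerivAt_deriv)).congr_deriv ?_
  rw [hf.apply_eq, hg.apply_eq, hf.deriv_eq, hg.deriv_eq]
  ring

protected theorem inv (hf : HasJet2At f a₀ a₁ a₂ z) (ha₀ : a₀ ≠ 0) :
    HasJet2At (fun u ↦ (f u)⁻¹) a₀⁻¹ (-a₁ / a₀ ^ 2) (-a₂ / a₀ ^ 2 + 2 * a₁ ^ 2 / a₀ ^ 3) z := by
  have hfz : f z ≠ 0 := hf.apply_eq ▸ ha₀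
  refine of_eventually_hasDerivAt (hf.analyticAt.inv hfz) (by rw [hf.apply_eq])
    ((hf.eventually_hasDerivAt.and (hf.analyticAt.continuousAt.eventually_ne hfz)).mono
      fun u hu ↦ hu.1.inv hu.2)
    (by rw [hf.apply_eq, hf.deriv_eq]) ?_
  refine (hf.hasDerivAt_deriv.neg.div (hf.hasDerivAt.pow 2) (pow_ne_zero 2 hfz)).congr_deriv ?_
  simp only [Pi.pow_apply, Pi.neg_apply, hf.apply_eq, hf.deriv_eq]
  field_simp
  ring

end HasJet2At

theorem HasJet2At.cexp {f : ℂ → ℂ} {z a₀ a₁ a₂ : ℂ} (hf : HasJet2At f a₀ a₁ a₂ z) :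
    HasJet2At (fun u ↦ exp (f u)) (exp a₀) (exp a₀ * a₁) (exp a₀ * (a₂ + a₁ ^ 2)) z := by
  refine of_eventually_hasDerivAt (analyticAt_cexp.comp hf.analyticAt) (by rw [hf.apply_eq])
    (hf.eventually_hasDerivAt.mono fun u hu ↦ hu.cexp) (by rw [hf.apply_eq, hf.deriv_eq]) ?_
  refine ((hf.hasDerivAt.cexp).mul hf.hasDerivAt_deriv).congr_deriv ?_
  rw [hf.apply_eq, hf.deriv_eq]
  ring

theorem HasFPowerSeriesAt.hasJet2At {𝕜 : Type*} [NontriviallyNormedField 𝕜] [CompleteSpace 𝕜]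
    {f : 𝕜 → 𝕜} {p : FormalMultilinearSeries 𝕜 𝕜 𝕜} {z : 𝕜} (hp : HasFPowerSeriesAt f p z) :
    HasJet2At f (p.coeff 0) (p.coeff 1) (2 * p.coeff 2) z := by
  refine ⟨hp.analyticAt, (hp.coeff_zero 1).symm, hp.deriv, ?_⟩
  obtain ⟨r, hr⟩ := hp
  have h := hr.factorial_smul 1 2
  rw [iteratedFDeriv_apply_eq_iteratedDeriv_mul_prod, Finset.prod_const_one, one_smul,
    iteratedDeriv_succ, iteratedDeriv_one] at h
  rw [← h, Nat.factorial_two, two_smul, two_mul]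
  rfl

theorem Complex.expSeries_coeff (n : ℕ) :
    (NormedSpace.expSeries ℂ ℂ).coeff n = (n.factorial : ℂ)⁻¹ := by
  rw [show (NormedSpace.expSeries ℂ ℂ).coeff n = NormedSpace.expSeries ℂ ℂ n (fun _ ↦ 1) from rfl,
    NormedSpace.expSeries_apply_eq]
  simp

theorem Complex.hasFPowerSeriesAt_exp_zero :
    HasFPowerSeriesAt exp (NormedSpace.expSeries ℂ ℂ) 0 :=
  exp_eq_exp_ℂ ▸ NormedSpace.exp_hasFPowerSeriesAt_zero

theorem hasJet2At_dslope_exp : HasJet2At (dslope exp 0) 1 (1 / 2) (1 / 3) 0 := by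
  refine hasFPowerSeriesAt_exp_zero.has_fpower_series_dslope_fslope.hasJet2At.congr_jet
    ?_ ?_ ?_ <;> norm_num [FormalMultilinearSeries.coeff_fslope, expSeries_coeff, Nat.factorial]

theorem Complex.exp_ne_one_of_norm_lt {u : ℂ} (hu₀ : u ≠ 0) (hu : ‖u‖ < 2 * Real.pi) :
    exp u ≠ 1 := by
  rintro h
  obtain ⟨n, rfl⟩ := exp_eq_one_iff.mp h
  have hn : n ≠ 0 := by rintro rfl; simp at hu₀
  have hn_abs : (1 : ℝ) ≤ |(n : ℝ)| := by exact_mod_cast Int.one_le_abs hn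
  have hnorm : ‖(n : ℂ) * (2 * Real.pi * I)‖ = |(n : ℝ)| * (2 * Real.pi) := by
    simp [Real.pi_pos.le]
  nlinarith [Real.pi_pos]

theorem dslope_exp_ne_zero {u : ℂ} (hu : ‖u‖ < 2 * Real.pi) : dslope exp 0 u ≠ 0 := by
  rcases eq_or_ne u 0 with rfl | hu₀
  · simp
  · rw [dslope_of_ne _ hu₀, slope_def_field, exp_zero, sub_zero]
    exact div_ne_zero (sub_ne_zero.mpr (exp_ne_one_of_norm_lt hu₀ hu)) hu₀

/-- `u / (exp u - 1)`, with its removable singularity at `0` filled in. -/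
noncomputable def bernoulliGenFun (u : ℂ) : ℂ := (dslope exp 0 u)⁻¹

/-- `u ^ 3 * gFun u`, with its removable singularity at `0` filled in. -/
noncomputable def cubeMulGFun (u : ℂ) : ℂ :=
  exp (exp u * bernoulliGenFun u) * exp u * bernoulliGenFun u ^ 3

theorem gFun_eq_cubeMulGFun_div {u : ℂ} (hu₀ : u ≠ 0) (hu : ‖u‖ < 2 * Real.pi) :
    gFun u = cubeMulGFun u / u ^ 3 := by
  have hexp : exp u - 1 ≠ 0 := sub_ne_zero.mpr (exp_ne_one_of_norm_lt hu₀ hu)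
  have hB : bernoulliGenFun u = u / (exp u - 1) := by
    rw [bernoulliGenFun, dslope_of_ne _ hu₀, slope_def_field, exp_zero, sub_zero, inv_div]
  rw [cubeMulGFun, hB, gFun, mul_div_assoc', mul_comm (exp u) u]
  field_simp

theorem differentiableOn_cubeMulGFun :
    DifferentiableOn ℂ cubeMulGFun (ball 0 (2 * Real.pi)) := by
  intro u hu
  have hu' : ‖u‖ < 2 * Real.pi := by simpa using hu
  have hB : DifferentiableAt ℂ bernoulliGenFun u :=
    (((differentiableOn_dslope univ_mem).mpr differentiable_exp.differentiableOn).differentiableAt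
      univ_mem).inv (dslope_exp_ne_zero hu')
  exact (((differentiableAt_exp.mul hB).cexp.mul differentiableAt_exp).mul
    (hB.pow 3)).differentiableWithinAt

theorem hasJet2At_bernoulliGenFun : HasJet2At bernoulliGenFun 1 (-1 / 2) (1 / 6) 0 :=
  (hasJet2At_dslope_exp.inv one_ne_zero).congr_jet (by norm_num) (by norm_num) (by norm_num)

theorem hasJet2At_cubeMulGFun : HasJet2At cubeMulGFun (exp 1) 0 (-(exp 1 / 12)) 0 := by
  have hB := hasJet2At_bernoulliGenFun
  have hexp : HasJet2At exp 1 1 1 0 :=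
    (HasJet2At.id 0).cexp.congr_jet (by simp) (by simp) (by simp)
  have hB3 : HasJet2At (fun u ↦ bernoulliGenFun u ^ 3) 1 (-3 / 2) 2 0 := by
    simpa only [← pow_three'] using
      ((hB.mul hB).mul hB).congr_jet (by norm_num) (by norm_num) (by norm_num)
  exact (((hexp.mul hB).cexp.mul hexp).mul hB3).congr_jet (by norm_num) (by norm_num; ring)
    (by norm_num; ring)

/-- For all sufficiently small radii `r > 0`, the counterclockwise circle integral
of `g` around `0` equals `-2πi·e/24`, i.e. the residue of `g` at `0` is `-e/24`. -/
theorem gFun_circleIntegral :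
    ∃ ε > 0, ∀ r : ℝ, 0 < r → r < ε →
      (∮ u in C(0, r), gFun u)
        = -(2 * Real.pi * Complex.I * (Real.exp 1 / 24)) := by
  refine ⟨2 * Real.pi, by positivity, fun r hr₀ hr ↦ ?_⟩
  calc (∮ u in C(0, r), gFun u)
      = ∮ u in C(0, r), (1 / (u - 0) ^ (2 + 1)) • cubeMulGFun u := by
        refine circleIntegral.integral_congr hr₀.le fun u hu ↦ ?_
        have hu' : ‖u‖ = r := by simpa using hu
        rw [gFun_eq_cubeMulGFun_div (norm_pos_iff.mp (hu' ▸ hr₀)) (hu' ▸ hr), smul_eq_mul,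
          sub_zero, one_div_mul_eq_div]
    _ = (2 * Real.pi * I / (2 : ℕ).factorial) • iteratedDeriv 2 cubeMulGFun 0 :=
        DifferentiableOn.circleIntegral_one_div_sub_center_pow_smul hr₀ 2
          (differentiableOn_cubeMulGFun.mono (closedBall_subset_ball hr))
    _ = -(2 * Real.pi * I * (Real.exp 1 / 24)) := by
        rw [iteratedDeriv_succ, iteratedDeriv_one, hasJet2At_cubeMulGFun.deriv_deriv_eq,
          ofReal_exp, smul_eq_mul]
        push_cast
        ring
end
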